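/- arXiv:2209.00580 — 5 statements merged into one kernel-verified Lean document; each statement's English description precedes it below -/
import Mathlib

section
/- Let $\Gamma$ be a countable group with enumeration $\{e = \gamma_0, \gamma_1, \dots\}$. Suppose there are constants $\epsilon_i > 0$ for $i \ge 1$ and, for each $n \ge 1$, a nonempty finite set $A_n$ and a map $\Theta_n : \Gamma \to \mathrm{Map}(A_n)$ with $\Theta_n(e) = \mathrm{id}_{A_n}$, such that for all $r > 0$ there exists $K_r > 0$ so that for $n > K_r$: (1) $d_H(\Theta_n(\gamma_i \gamma_j), \Theta_n(\gamma_i)\Theta_n(\gamma_j)) = 0$ for $1 \le i,j \le r$, and (2) $d_H(\Theta_n(\gamma_i), \mathrm{id}_{A_n}) > \epsilon_i$ for $1 \le i \le r$. Then $\Gamma$ is locally embeddable into finite groups (LEF). -/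
open scoped Classical

/-- Normalized Hamming distance between two self-maps of a finite type. -/
noncomputable def hamDist {A : Type} [Fintype A] (f g : A → A) : ℝ :=
  (Nat.card {x : A // f x ≠ g x} : ℝ) / Fintype.card A

/-- `Γ` is locally embeddable into finite groups: every finite subset admits a map
to a finite group which is injective on it and multiplicative on it. -/
def IsLEF (Γ : Type*) [Group Γ] : Prop :=
  ∀ F : Finset Γ, ∃ (H : Type) (_ : Fintype H) (_ : Group H) (φ : Γ → H),
    Set.InjOn φ (F : Set Γ) ∧ ∀ x ∈ F, ∀ y ∈ F, φ (x * y) = φ x * φ y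

lemma hamDist_id {A : Type} [Fintype A] : hamDist (id : A → A) id = 0 := by
  unfold hamDist
  simp

/-- Lemma 5.3 (compressed LEF representation): let `{γ₀ = e, γ₁, …}` enumerate a
countable group `Γ`.  Suppose there are `ε i > 0` (`i ≥ 1`) and, for each `n`,
a nonempty finite set `A n` and a map `Θ n : Γ → Map(A n)` with `Θ n e = id`,
such that for every `r` there is `K r` with, for all `n > K r`:
(1) `Θ n (γ i γ j) = Θ n (γ i) ∘ Θ n (γ j)` for `1 ≤ i, j ≤ r` (Hamming distance `0`), and
(2) `d_H(Θ n (γ i), id) > ε i` for `1 ≤ i ≤ r`.  Then `Γ` is LEF. -/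
theorem stmt8 {Γ : Type*} [Group Γ] (γ : ℕ → Γ)
    (hsurj : Function.Surjective γ) (hγ0 : γ 0 = 1)
    (ε : ℕ → ℝ) (hε : ∀ i, 1 ≤ i → 0 < ε i)
    (A : ℕ → Type) (_ : ∀ n, Fintype (A n)) (_ : ∀ n, Nonempty (A n))
    (Θ : (n : ℕ) → Γ → (A n → A n))
    (hid : ∀ n, Θ n 1 = id)
    (H : ∀ r : ℕ, ∃ K : ℕ, ∀ n, K < n →
      (∀ i j, 1 ≤ i → i ≤ r → 1 ≤ j → j ≤ r →
        Θ n (γ i * γ j) = (Θ n (γ i)) ∘ (Θ n (γ j))) ∧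
      (∀ i, 1 ≤ i → i ≤ r → ε i < hamDist (Θ n (γ i)) id)) :
    IsLEF Γ := by
  rename_i hfin hne
  intro F
  classical
  open scoped Pointwise in
  set T : Finset Γ := F ∪ F⁻¹ ∪ F * F⁻¹ with hT
  set ι : Γ → ℕ := fun g => (hsurj g).choose with hιdef
  have hι : ∀ g : Γ, γ (ι g) = g := fun g => (hsurj g).choose_spec
  have hι0 : ∀ g : Γ, g ≠ 1 → 1 ≤ ι g := by
    intro g hg
    rcases Nat.eq_zero_or_pos (ι g) with h | h
    · exact absurd (by rw [← hι g, h, hγ0]) hg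
    · exact h
  set r : ℕ := T.sup ι with hr
  obtain ⟨K, hK⟩ := H r
  set n : ℕ := K + 1 with hn
  have hKn := hK n (by omega)
  have h1 := hKn.1
  have h2 := hKn.2
  haveI := hfin n
  -- multiplicativity on T
  have mul : ∀ g h : Γ, g ∈ T → h ∈ T → Θ n (g * h) = (Θ n g) ∘ (Θ n h) := by
    intro g h hg hh
    by_cases hg1 : g = 1
    · subst hg1; rw [one_mul, hid]; rfl
    by_cases hh1 : h = 1
    · subst hh1; rw [mul_one, hid]; rfl
    have := h1 (ι g) (ι h) (hι0 g hg1) (Finset.le_sup hg) (hι0 h hh1) (Finset.le_sup hh)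
    rwa [hι, hι] at this
  -- nonidentity on T
  have nid : ∀ g : Γ, g ∈ T → g ≠ 1 → Θ n g ≠ id := by
    intro g hg hg1 heq
    have := h2 (ι g) (hι0 g hg1) (Finset.le_sup hg)
    rw [hι, heq, @hamDist_id (A n) (hfin n)] at this
    exact absurd this (not_lt.2 (hε (ι g) (hι0 g hg1)).le)
  have memF : ∀ x ∈ F, x ∈ T := fun x hx =>
    Finset.mem_union_left _ (Finset.mem_union_left _ hx)
  have memFi : ∀ x ∈ F, x⁻¹ ∈ T := fun x hx =>
    Finset.mem_union_left _ (Finset.mem_union_right _ (Finset.inv_mem_inv hx))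
  have memM : ∀ x ∈ F, ∀ y ∈ F, x * y⁻¹ ∈ T := fun x hx y hy =>
    Finset.mem_union_right _ (Finset.mul_mem_mul hx (Finset.inv_mem_inv hy))
  -- bijectivity on F
  have bij : ∀ x ∈ F, Function.Bijective (Θ n x) := by
    intro x hx
    have l : Θ n (x⁻¹ * x) = Θ n x⁻¹ ∘ Θ n x := mul _ _ (memFi x hx) (memF x hx)
    have rr : Θ n (x * x⁻¹) = Θ n x ∘ Θ n x⁻¹ := mul _ _ (memF x hx) (memFi x hx)
    rw [inv_mul_cancel, hid] at l
    rw [mul_inv_cancel, hid] at rr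
    exact Function.bijective_iff_has_inverse.2
      ⟨Θ n x⁻¹, fun a => (congrFun l.symm a), fun a => (congrFun rr.symm a)⟩
  set φ : Γ → Equiv.Perm (A n) :=
    fun g => if hb : Function.Bijective (Θ n g) then Equiv.ofBijective _ hb else 1 with hφ
  have hφF : ∀ x ∈ F, ∀ a, φ x a = Θ n x a := by
    intro x hx a
    simp only [hφ, dif_pos (bij x hx)]
    rfl
  refine ⟨Equiv.Perm (A n), inferInstance, inferInstance, φ, ?_, ?_⟩
  · intro x hx y hy hxy
    by_contra hne'
    have hΘ : Θ n x = Θ n y := by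
      funext a
      rw [← hφF x hx a, ← hφF y hy a, hxy]
    have hg1 : x * y⁻¹ ≠ 1 := fun h => hne' (mul_inv_eq_one.mp h)
    have key : Θ n x = Θ n (x * y⁻¹) ∘ Θ n x := by
      have := mul (x * y⁻¹) y (memM x hx y hy) (memF y hy)
      rw [inv_mul_cancel_right] at this
      nth_rewrite 1 [this]
      rw [hΘ]
    apply nid (x * y⁻¹) (memM x hx y hy) hg1
    funext a
    obtain ⟨b, hb⟩ := (bij x hx).2 a
    have hk := congrFun key b
    simp only [Function.comp_apply] at hk
    rw [← hb]
    show Θ n (x * y⁻¹) (Θ n x b) = Θ n x b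
    exact hk.symm
  · intro x hx y hy
    have hmul := mul x y (memF x hx) (memF y hy)
    have hbxy : Function.Bijective (Θ n (x * y)) := by
      rw [hmul]; exact (bij x hx).comp (bij y hy)
    ext a
    have : φ (x * y) a = Θ n (x * y) a := by
      simp only [hφ, dif_pos hbxy]; rfl
    have e1 : (φ x * φ y) a = φ x (φ y a) := rfl
    rw [this, hmul, e1, hφF x hx, hφF y hy]
    rfl
end

section
/- Let $A$ be a finite set and $f, g \in \mathrm{Map}(A)$, with normalized Hamming distance $d_H(f,g) = |\{x : f(x) \neq g(x)\}|/|A|$. For $l \in \mathbb{N}_+$ define $f^{\times l}, g^{\times l} \in \mathrm{Map}(A^l)$ coordinatewise. Then $d_H(f^{\times l}, g^{\times l}) = 1 - (1 - d_H(f,g))^l$. -/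
/-!
`f^{×l}` and `g^{×l}` agree at a tuple exactly when `f` and `g` agree at every coordinate,
so the agreement set of the product maps is the `l`-th power of the agreement set of `f` and
`g`. Hence agreement densities multiply: `1 - d_H(f^{×l}, g^{×l}) = (1 - d_H(f, g))^l`.
-/

theorem Fintype.card_pi_map_eq_map {ι A B : Type*} [Fintype ι] [DecidableEq ι] [Fintype A]
    [DecidableEq B] (f g : A → B) :
    Fintype.card {x : ι → A // (fun i => f (x i)) = (fun i => g (x i))}
      = Fintype.card {a : A // f a = g a} ^ Fintype.card ι := by
  let e : {x : ι → A // (fun i => f (x i)) = (fun i => g (x i))} ≃ (ι → {a : A // f a = g a}) :=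
    (Equiv.subtypeEquivRight fun _ => funext_iff).trans
      (Equiv.subtypePiEquivPi (p := fun _ a => f a = g a))
  rw [Fintype.card_congr e, Fintype.card_fun]

theorem Nat.card_pi_map_ne_map {ι A B : Type*} [Fintype ι] [DecidableEq ι] [Fintype A]
    [DecidableEq B] (f g : A → B) :
    Nat.card {x : ι → A // (fun i => f (x i)) ≠ (fun i => g (x i))}
      = Fintype.card A ^ Fintype.card ι - Fintype.card {a : A // f a = g a} ^ Fintype.card ι := by
  rw [Nat.card_eq_fintype_card, Fintype.card_subtype_compl, Fintype.card_pi_map_eq_map,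
    Fintype.card_fun]

/-- For `N = 0` both sides vanish, the right one because `0 / 0 = 0`. -/
theorem natCast_pow_sub_pow_div_pow {m N : ℕ} (hmN : m ≤ N) (l : ℕ) :
    ((N ^ l - m ^ l : ℕ) : ℝ) / (N ^ l : ℕ) = 1 - (1 - ((N - m : ℕ) : ℝ) / N) ^ l := by
  rcases Nat.eq_zero_or_pos N with rfl | hN
  · obtain rfl : m = 0 := Nat.le_zero.mp hmN
    simp
  · have hagree : (1 : ℝ) - ((N - m : ℕ) : ℝ) / N = m / N := by
      rw [Nat.cast_sub hmN]
      field_simp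
      ring
    rw [hagree, div_pow, Nat.cast_sub (Nat.pow_le_pow_left hmN l)]
    push_cast
    field_simp

theorem stmt9_general {A : Type*} [Fintype A] (f g : A → A) (l : ℕ) :
    (Nat.card {x : Fin l → A // (fun i => f (x i)) ≠ (fun i => g (x i))} : ℝ)
        / Fintype.card (Fin l → A)
      = 1 - (1 - (Nat.card {a : A // f a ≠ g a} : ℝ) / Fintype.card A) ^ l := by
  classical
  have hdisagree : Nat.card {a : A // f a ≠ g a}
      = Fintype.card A - Fintype.card {a : A // f a = g a} := by
    rw [Nat.card_eq_fintype_card, Fintype.card_subtype_compl]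
  rw [Nat.card_pi_map_ne_map, hdisagree, Fintype.card_fun, Fintype.card_fin]
  exact natCast_pow_sub_pow_div_pow (Fintype.card_subtype_le fun a => f a = g a) l

/-- For self-maps `f, g` of a finite set `A` and the coordinatewise maps
`f^{×l}, g^{×l}` on `A^l`, the normalized Hamming distances satisfy
`d_H(f^{×l}, g^{×l}) = 1 - (1 - d_H(f,g))^l`. -/
theorem stmt9 {A : Type*} [Fintype A] (f g : A → A) (l : ℕ) (hl : 1 ≤ l) :
    (Nat.card {x : Fin l → A // (fun i => f (x i)) ≠ (fun i => g (x i))} : ℝ)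
        / Fintype.card (Fin l → A)
      = 1 - (1 - (Nat.card {a : A // f a ≠ g a} : ℝ) / Fintype.card A) ^ l :=
  stmt9_general f g l
end

section
/- Let $\alpha : G \curvearrowright X$ be an action of a locally finite group $G$ on the Cantor set $X$. Then the topological full group $[[\alpha]]$ is locally finite. -/
/-- `φ` (a bijection of `X`) belongs to the topological full group of the action
`G ↷ X`: there is a continuous (i.e. locally constant) orbit cocycle `c : X → G`
with `φ x = c x • x` for all `x`. -/
def InTopFullGroup {G X : Type*} [Group G] [TopologicalSpace X] [MulAction G X]
    (φ : Equiv.Perm X) : Prop :=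
  ∃ c : X → G, IsLocallyConstant c ∧ ∀ x : X, φ x = c x • x

/-- If a locally finite group `G` acts (by homeomorphisms) on the Cantor set `X`,
then the topological full group `[[α]]` is locally finite: every finite subset of
`[[α]]` generates a finite subgroup. -/
theorem stmt11 {G X : Type*} [Group G] [TopologicalSpace X] [CompactSpace X]
    [TopologicalSpace.MetrizableSpace X] [TotallyDisconnectedSpace X]
    [PerfectSpace X] [Nonempty X] [MulAction G X]
    (hcont : ∀ g : G, Continuous fun x : X => g • x)
    (hlocfin : ∀ S : Finset G, (Subgroup.closure (S : Set G) : Set G).Finite)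
    (T : Finset (Equiv.Perm X)) (hT : ∀ φ ∈ T, InTopFullGroup (G := G) φ) :
    (Subgroup.closure (T : Set (Equiv.Perm X)) : Set (Equiv.Perm X)).Finite := by
  classical
  -- choose cocycles
  set c : Equiv.Perm X → X → G := fun φ =>
    if h : InTopFullGroup (G := G) φ then Classical.choose h else fun _ => 1 with hc_def
  have hc : ∀ φ ∈ T, IsLocallyConstant (c φ) ∧ ∀ x, φ x = c φ x • x := by
    intro φ hφ
    have h := hT φ hφ
    simp only [hc_def, dif_pos h]
    exact ⟨(Classical.choose_spec h).1, (Classical.choose_spec h).2⟩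
  set Sf : Set G := ⋃ φ ∈ T, Set.range (c φ) with hSf_def
  have hSfin : Sf.Finite :=
    Set.Finite.biUnion T.finite_toSet (fun φ hφ => (hc φ hφ).1.range_finite)
  set H : Subgroup G := Subgroup.closure Sf with hH_def
  have hHfin : (H : Set G).Finite := by
    have := hlocfin hSfin.toFinset
    rwa [Set.Finite.coe_toFinset] at this
  haveI : Finite H := hHfin.to_subtype
  haveI : Finite Sf := hSfin.to_subtype
  -- the piece map
  set q : X → (H → T → G) := fun x h φ => c φ ((h : G) • x) with hq_def
  have qb : ∀ x y : X, q x = q y → ∀ h' : H, q ((h' : G) • x) = q ((h' : G) • y) := by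
    intro x y hxy h'
    funext h φ
    have h1 : c (φ : Equiv.Perm X) ((h : G) • ((h' : G) • x))
        = q x (h * h') φ := by
      simp only [hq_def, smul_smul, Subgroup.coe_mul]
    have h2 : c (φ : Equiv.Perm X) ((h : G) • ((h' : G) • y))
        = q y (h * h') φ := by
      simp only [hq_def, smul_smul, Subgroup.coe_mul]
    show c (φ : Equiv.Perm X) ((h : G) • ((h' : G) • x))
      = c (φ : Equiv.Perm X) ((h : G) • ((h' : G) • y))
    rw [h1, h2, hxy]
  have qa : ∀ x y : X, q x = q y → ∀ φ ∈ T, c φ x = c φ y := by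
    intro x y hxy φ hφ
    have := congrFun (congrFun hxy (1 : H)) ⟨φ, hφ⟩
    simpa [hq_def] using this
  -- the big finite subgroup
  set Kcar : Set (Equiv.Perm X) :=
    {ψ | ∀ x : X, ∃ h : H, ∀ y : X, q y = q x → ψ y = (h : G) • y} with hK_def
  have hone : (1 : Equiv.Perm X) ∈ Kcar := fun x => ⟨1, fun y _ => by simp⟩
  have hmul : ∀ ψ₂ ψ₁ : Equiv.Perm X, ψ₂ ∈ Kcar → ψ₁ ∈ Kcar → ψ₂ * ψ₁ ∈ Kcar := by
    intro ψ₂ ψ₁ h2 h1 x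
    obtain ⟨g1, H1⟩ := h1 x
    obtain ⟨g2, H2⟩ := h2 (ψ₁ x)
    refine ⟨g2 * g1, fun y hy => ?_⟩
    have hy1 : ψ₁ y = (g1 : G) • y := H1 y hy
    have hq1 : q (ψ₁ y) = q (ψ₁ x) := by
      rw [hy1, H1 x rfl]
      exact qb x y hy.symm g1 ▸ (qb y x hy g1)
    have := H2 (ψ₁ y) hq1
    calc (ψ₂ * ψ₁) y = ψ₂ (ψ₁ y) := rfl
      _ = (g2 : G) • (ψ₁ y) := this
      _ = (g2 : G) • ((g1 : G) • y) := by rw [hy1]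
      _ = ((g2 * g1 : H) : G) • y := by rw [smul_smul]; rfl
  have hinv : ∀ ψ : Equiv.Perm X, ψ ∈ Kcar → ψ⁻¹ ∈ Kcar := by
    intro ψ hψ x
    obtain ⟨g, Hg⟩ := hψ (ψ⁻¹ x)
    refine ⟨g⁻¹, fun y hy => ?_⟩
    have hx : ψ (ψ⁻¹ x) = (g : G) • (ψ⁻¹ x) := Hg _ rfl
    have hx' : x = (g : G) • (ψ⁻¹ x) := by
      rw [← hx]; exact (Equiv.apply_symm_apply ψ x).symm
    have hqy : q ((g : G)⁻¹ • y) = q (ψ⁻¹ x) := by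
      have h1 : q ((g : G)⁻¹ • y) = q ((g : G)⁻¹ • x) := by
        have := qb y x hy (g⁻¹)
        simpa using this
      have h2 : (g : G)⁻¹ • x = ψ⁻¹ x := by
        conv_lhs => rw [hx']
        rw [inv_smul_smul]
      rw [h1, h2]
    have := Hg ((g : G)⁻¹ • y) hqy
    rw [smul_inv_smul] at this
    have : ψ⁻¹ y = (g : G)⁻¹ • y := by
      conv_lhs => rw [← this]
      exact Equiv.symm_apply_apply ψ _
    simpa using this
  let K : Subgroup (Equiv.Perm X) :=
    { carrier := Kcar
      one_mem' := hone
      mul_mem' := fun {a b} ha hb => hmul a b ha hb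
      inv_mem' := fun {a} ha => hinv a ha }
  -- T ⊆ K
  have hTK : (T : Set (Equiv.Perm X)) ⊆ Kcar := by
    intro φ hφ x
    have hφT : φ ∈ T := hφ
    have hmem : c φ x ∈ Sf := Set.mem_biUnion hφT ⟨x, rfl⟩
    refine ⟨⟨c φ x, Subgroup.subset_closure hmem⟩, fun y hy => ?_⟩
    have := (hc φ hφT).2 y
    rw [this, qa y x hy φ hφT]
  -- range of q is finite
  have hR : (Set.range q).Finite := by
    have hsub : Set.range q ⊆
        Set.range (fun (g : H → T → Sf) (h : H) (φ : T) => (g h φ : G)) := by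
      rintro _ ⟨x, rfl⟩
      refine ⟨fun h φ => ⟨c φ ((h : G) • x), Set.mem_biUnion φ.2 ⟨_, rfl⟩⟩, rfl⟩
    exact Set.Finite.subset (Set.finite_range _) hsub
  haveI : Finite (Set.range q) := hR.to_subtype
  -- K is finite
  have hKfin : Kcar.Finite := by
    have hinjOn : Set.InjOn (fun ψ : Equiv.Perm X => (ψ : X → X)) Kcar :=
      fun a _ b _ h => Equiv.coe_fn_injective h
    refine Set.Finite.of_finite_image ?_ hinjOn
    have hsub : (fun ψ : Equiv.Perm X => (ψ : X → X)) '' Kcar ⊆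
        Set.range (fun (f : Set.range q → H) (x : X) =>
          ((f ⟨q x, Set.mem_range_self x⟩ : H) : G) • x) := by
      rintro _ ⟨ψ, hψ, rfl⟩
      refine ⟨fun v => Classical.choose (hψ (Classical.choose v.2)), ?_⟩
      funext x
      set v : Set.range q := ⟨q x, Set.mem_range_self x⟩ with hv
      have hx0 : q (Classical.choose v.2) = q x := Classical.choose_spec v.2
      have hspec := Classical.choose_spec (hψ (Classical.choose v.2))
      simpa using (hspec x hx0.symm).symm
    exact Set.Finite.subset (Set.finite_range _) hsub
  -- conclude
  have hle : (Subgroup.closure (T : Set (Equiv.Perm X)) : Set (Equiv.Perm X)) ⊆ Kcar := by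
    intro x hx
    exact (Subgroup.closure_le K).2 hTK hx
  exact hKfin.subset hle
end

section
/- Let $T$ be a finite set, $\mathcal{G} = \{G_n\}$ a hyperfinite sequence of proper $T$-labeled directed graphs, and $l \in \mathbb{N}_+$ a constant. Let $\mathcal{H} = \{G_n^l\}$ be the diagonal product sequence: $V(G_n^l) = V(G_n)^l$, and $(x_1,\dots,x_l)$ is joined to $(y_1,\dots,y_l)$ by an edge labeled $t \in T$ iff $(x_i,y_i)$ is an edge of $G_n$ labeled $t$ for every $i$. Then $\mathcal{H}$ is hyperfinite. -/
/-- Elek's hyperfiniteness for a sequence of finite `T`-labeled directed graphs: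
edges are triples `(x, t, y)` (an edge from `x` to `y` labeled `t`), and
crossing edges of a partition are counted with labels. -/
def HyperfiniteLab (T : Type) (V : ℕ → Type) [∀ n, Fintype (V n)]
    (E : (n : ℕ) → Set (V n × T × V n)) : Prop :=
  ∀ ε : ℝ, 0 < ε → ∃ K : ℕ, 0 < K ∧ ∃ P : (n : ℕ) → V n → ℕ,
    (∀ n i, {v : V n | P n v = i}.ncard ≤ K) ∧
    Filter.limsup
      (fun n => ({e ∈ E n | P n e.1 ≠ P n e.2.2}.ncard : ℝ) / Fintype.card (V n))
      Filter.atTop < ε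

/-!
Partition `V(G_n)^l` by the tuple of block indices of the coordinates, so that blocks have at
most `K^l` elements. A crossing product edge crosses in some coordinate `i`, and it is determined
by `i`, the crossing edge of `G_n` in coordinate `i` and the other `l - 1` source coordinates,
because properness makes the targets a function of the sources and the label. Hence the crossing
fraction of the product is at most `l` times that of `G_n`. Properness also bounds the edge
density of `G_n` by `|T|`, so the crossing fractions are bounded and their limsup bounds them
eventually.
-/

open Filter

theorem limsup_le_mul_of_le_mul {α : Type*} {L : Filter α} [L.NeBot] {f g : α → ℝ} {c δ : ℝ}
    (hc : 0 ≤ c) (hf : ∀ a, 0 ≤ f a) (hg : IsBoundedUnder (· ≤ ·) L g)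
    (hgδ : limsup g L < δ) (hfg : ∀ a, f a ≤ c * g a) : limsup f L ≤ c * δ :=
  limsup_le_of_le (isCoboundedUnder_le_of_le L hf)
    ((eventually_lt_of_limsup_lt hgδ hg).mono fun a ha =>
      (hfg a).trans (mul_le_mul_of_nonneg_left ha.le hc))

section LabeledGraph

variable {V T : Type}

def IsProperLabeling (E : Set (V × T × V)) : Prop :=
  ∀ x y y' t, (x, t, y) ∈ E → (x, t, y') ∈ E → y = y'

def crossingEdges (E : Set (V × T × V)) (P : V → ℕ) : Set (V × T × V) :=
  {e ∈ E | P e.1 ≠ P e.2.2}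

def diagPow (E : Set (V × T × V)) (l : ℕ) : Set ((Fin l → V) × T × (Fin l → V)) :=
  {e | ∀ i, (e.1 i, e.2.1, e.2.2 i) ∈ E}

def piPartition {l : ℕ} (P : V → ℕ) (x : Fin l → V) : ℕ :=
  Encodable.encode (P ∘ x)

theorem ncard_fiber_piPartition_le [Finite V] {l K : ℕ} {P : V → ℕ}
    (hP : ∀ i, {v | P v = i}.ncard ≤ K) (i : ℕ) :
    {x : Fin l → V | piPartition P x = i}.ncard ≤ K ^ l := by
  rcases Set.eq_empty_or_nonempty {x : Fin l → V | piPartition P x = i} with h | ⟨x₀, hx₀⟩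
  · simp [h]
  have hsub : {x : Fin l → V | piPartition P x = i} ⊆
      Set.univ.pi fun j => {v | P v = P (x₀ j)} := fun x hx j _ =>
    congrFun (Encodable.encode_injective (hx.trans hx₀.symm)) j
  calc {x : Fin l → V | piPartition P x = i}.ncard
      ≤ (Set.univ.pi fun j => {v | P v = P (x₀ j)}).ncard :=
        Set.ncard_le_ncard hsub (Set.toFinite _)
    _ = ∏ j, {v | P v = P (x₀ j)}.ncard := by
        rw [← Nat.card_coe_set_eq, Nat.card_congr (Equiv.Set.univPi _), Nat.card_pi]
        simp only [Nat.card_coe_set_eq]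
    _ ≤ ∏ _j : Fin l, K := Finset.prod_le_prod' fun j _ => hP _
    _ = K ^ l := by simp

theorem crossingEdges_diagPow {l : ℕ} (E : Set (V × T × V)) (P : V → ℕ) :
    crossingEdges (diagPow E l) (piPartition P) =
      {e ∈ diagPow E l | ∃ i, P (e.1 i) ≠ P (e.2.2 i)} := by
  ext e
  simp only [crossingEdges, piPartition, Set.mem_sep_iff, ne_eq, Encodable.encode_inj,
    Function.ne_iff, Function.comp_apply]

namespace IsProperLabeling

variable [Fintype V] [Fintype T] {E : Set (V × T × V)}

theorem ncard_le (hE : IsProperLabeling E) : E.ncard ≤ Fintype.card T * Fintype.card V := by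
  calc E.ncard = Nat.card E := (Nat.card_coe_set_eq _).symm
    _ ≤ Nat.card (T × V) := by
        refine Nat.card_le_card_of_injective (fun e => (e.1.2.1, e.1.1)) ?_
        rintro ⟨⟨x, t, y⟩, he⟩ ⟨⟨x', t', y'⟩, he'⟩ h
        obtain ⟨rfl, rfl⟩ := Prod.mk.inj h
        obtain rfl := hE _ _ _ _ he he'
        rfl
    _ = Fintype.card T * Fintype.card V := by simp

/-- A crossing product edge `(x, t, y)` together with an arbitrary `v : V` is encoded by a
coordinate `i` where it crosses, the crossing edge `(x i, t, y i)`, and `x` with its `i`-th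
entry replaced by `v`; properness recovers `y` from `x` and `t`. -/
theorem ncard_crossingEdges_diagPow_mul_le (hE : IsProperLabeling E) (l : ℕ) (P : V → ℕ) :
    (crossingEdges (diagPow E l) (piPartition P)).ncard * Fintype.card V ≤
      l * (crossingEdges E P).ncard * Fintype.card V ^ l := by
  classical
  rw [crossingEdges_diagPow]
  set S := {e ∈ diagPow E l | ∃ i, P (e.1 i) ≠ P (e.2.2 i)}
  choose idx hidx using fun e : S => e.2.2
  let φ : S × V → Fin l × crossingEdges E P × (Fin l → V) := fun ⟨e, v⟩ =>
    (idx e, ⟨(e.1.1 (idx e), e.1.2.1, e.1.2.2 (idx e)), e.2.1 (idx e), hidx e⟩,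
      Function.update e.1.1 (idx e) v)
  have hφ : Function.Injective φ := by
    rintro ⟨e, v⟩ ⟨e', v'⟩ h
    simp only [φ, Prod.mk.injEq] at h
    obtain ⟨hi, hedge, hupd⟩ := h
    have hx : e.1.1 (idx e) = e'.1.1 (idx e') := congrArg (fun c => c.1.1) hedge
    have ht : e.1.2.1 = e'.1.2.1 := congrArg (fun c => c.1.2.1) hedge
    rw [hi] at hx hupd
    have hxx : e.1.1 = e'.1.1 := by
      funext j
      by_cases hj : j = idx e'
      · rw [hj, hx]
      · simpa [Function.update_of_ne hj] using congrFun hupd j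
    have hyy : e.1.2.2 = e'.1.2.2 :=
      funext fun j => hE _ _ _ _ (e.2.1 j) (hxx ▸ ht ▸ e'.2.1 j)
    have hvv : v = v' := by simpa using congrFun hupd (idx e')
    rw [Subtype.ext (Prod.ext hxx (Prod.ext ht hyy)), hvv]
  calc S.ncard * Fintype.card V = Nat.card (S × V) := by
        rw [Nat.card_prod, Nat.card_coe_set_eq, Nat.card_eq_fintype_card]
    _ ≤ Nat.card (Fin l × crossingEdges E P × (Fin l → V)) := Nat.card_le_card_of_injective φ hφ
    _ = l * (crossingEdges E P).ncard * Fintype.card V ^ l := by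
        rw [Nat.card_prod, Nat.card_prod, Nat.card_coe_set_eq, Nat.card_fun, Nat.card_fin,
          Nat.card_eq_fintype_card, mul_assoc]

theorem crossingEdges_ratio_le (hE : IsProperLabeling E) (P : V → ℕ) :
    ((crossingEdges E P).ncard : ℝ) / Fintype.card V ≤ Fintype.card T := by
  refine div_le_of_le_mul₀ (Nat.cast_nonneg _) (Nat.cast_nonneg _) ?_
  exact_mod_cast (Set.ncard_le_ncard (Set.sep_subset _ _) (Set.toFinite _)).trans hE.ncard_le

theorem crossingEdges_diagPow_ratio_le (hE : IsProperLabeling E) (l : ℕ) (P : V → ℕ) :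
    ((crossingEdges (diagPow E l) (piPartition P)).ncard : ℝ) / Fintype.card (Fin l → V) ≤
      l * ((crossingEdges E P).ncard / Fintype.card V) := by
  rcases isEmpty_or_nonempty V with hV | hV
  · have hempty : crossingEdges (diagPow E l) (piPartition P) = ∅ := by
      rw [crossingEdges_diagPow, Set.eq_empty_iff_forall_notMem]
      rintro e ⟨-, i, -⟩
      exact hV.false (e.1 i)
    simp [hempty]
  have hcard : (0 : ℝ) < Fintype.card V := by exact_mod_cast Fintype.card_pos
  rw [Fintype.card_fun, Fintype.card_fin, Nat.cast_pow, div_le_iff₀ (by positivity),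
    mul_div_assoc', div_mul_eq_mul_div, le_div_iff₀ hcard]
  exact_mod_cast hE.ncard_crossingEdges_diagPow_mul_le l P

end IsProperLabeling

end LabeledGraph

theorem stmt16_general (T : Type) [Fintype T] (V : ℕ → Type) [∀ n, Fintype (V n)]
    (E : (n : ℕ) → Set (V n × T × V n))
    (hproper : ∀ n (x y y' : V n) (t : T),
      (x, t, y) ∈ E n → (x, t, y') ∈ E n → y = y')
    (l : ℕ)
    (hG : HyperfiniteLab T V E) :
    HyperfiniteLab T (fun n => Fin l → V n)
      (fun n => {e | ∀ i : Fin l, (e.1 i, e.2.1, e.2.2 i) ∈ E n}) := by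
  have hE : ∀ n, IsProperLabeling (E n) := hproper
  intro ε hε
  obtain ⟨K, hK, P, hPK, hPlim⟩ := hG (ε / (2 * (l + 1))) (by positivity)
  refine ⟨K ^ l, pow_pos hK l, fun n => piPartition (P n),
    fun n => ncard_fiber_piPartition_le (hPK n), ?_⟩
  calc _ ≤ l * (ε / (2 * (l + 1))) :=
        limsup_le_mul_of_le_mul (Nat.cast_nonneg l) (fun n => by positivity)
          (isBoundedUnder_of ⟨_, fun n => (hE n).crossingEdges_ratio_le (P n)⟩) hPlim
          (fun n => (hE n).crossingEdges_diagPow_ratio_le l (P n))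
    _ < ε := by
        rw [mul_div_assoc', div_lt_iff₀ (by positivity)]
        nlinarith

/-- The constant-exponent diagonal product of a hyperfinite sequence of proper
`T`-labeled directed graphs is hyperfinite: the product graph on `V(G_n)^l` has
an edge `(x, t, y)` iff `(x i, t, y i)` is an edge of `G_n` for every `i`. -/
theorem stmt16 (T : Type) [Fintype T] (V : ℕ → Type) [∀ n, Fintype (V n)]
    (E : (n : ℕ) → Set (V n × T × V n))
    (hproper : ∀ n (x y y' : V n) (t : T),
      (x, t, y) ∈ E n → (x, t, y') ∈ E n → y = y')
    (l : ℕ) (hl : 1 ≤ l)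
    (hG : HyperfiniteLab T V E) :
    HyperfiniteLab T (fun n => Fin l → V n)
      (fun n => {e | ∀ i : Fin l, (e.1 i, e.2.1, e.2.2 i) ∈ E n}) :=
  stmt16_general T V E hproper l hG
end

section
/- Let $\alpha : G \curvearrowright X$ be a topologically free residually finite action of a countable group $G$ on the Cantor set $X$ with compatible metric $d$. Then for any finite $F \subseteq G$ and $\epsilon > 0$, there exists a finite set $E' \subseteq X$ consisting entirely of free points of $\alpha$, equipped with a $G$-action $\beta'$ on $E'$, such that $E'$ is $\epsilon$-dense in $X$ and $d(\alpha(s)(z), \beta'(s)(z)) < \epsilon$ for all $z \in E'$ and $s \in F$. -/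
/-- `(E, β)` is a finite approximating system witnessing residual finiteness of
the action for the data `(F, ε)`: `E` is a finite subset of `X` invariant under
the maps `β g`, `β` is a `G`-action on `E`, `E` is `ε`-dense in `X`, and `β`
`ε`-approximates the action on `E` for group elements in `F`. -/
def RFWitness {G X : Type*} [Group G] [MetricSpace X] [MulAction G X]
    (F : Finset G) (ε : ℝ) (E : Finset X) (β : G → X → X) : Prop :=
  (∀ g : G, ∀ z ∈ E, β g z ∈ E) ∧
  (∀ z ∈ E, β 1 z = z) ∧
  (∀ g h : G, ∀ z ∈ E, β (g * h) z = β g (β h z)) ∧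
  (∀ x : X, ∃ z ∈ E, dist x z < ε) ∧
  (∀ s ∈ F, ∀ z ∈ E, dist (s • z) (β s z) < ε)

/-- In a perfect metric space, we can injectively perturb a finite set into a
dense set, moving each point less than `δ`. -/
lemma exists_injOn_perturb {X : Type*} [MetricSpace X] [PerfectSpace X]
    (D : Set X) (hD : Dense D) (E : Finset X) (δ : ℝ) (hδ : 0 < δ) :
    ∃ f : X → X, Set.InjOn f E ∧ ∀ z ∈ E, f z ∈ D ∧ dist z (f z) < δ := by
  classical
  induction E using Finset.induction_on with
  | empty => exact ⟨id, by simp, by simp⟩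
  | @insert a E ha ih =>
    obtain ⟨f, hinj, hf⟩ := ih
    have hball : (Metric.ball a δ).Infinite :=
      infinite_of_mem_nhds a (Metric.ball_mem_nhds a hδ)
    have hopen : IsOpen (Metric.ball a δ \ f '' (E : Set X)) :=
      Metric.isOpen_ball.sdiff ((E.finite_toSet.image f).isClosed)
    have hne : (Metric.ball a δ \ f '' (E : Set X)).Nonempty :=
      (hball.diff (E.finite_toSet.image f)).nonempty
    obtain ⟨w, hwD, hw⟩ := hD.exists_mem_open hopen hne
    refine ⟨Function.update f a w, ?_, ?_⟩
    · intro x hx y hy hxy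
      simp only [Finset.coe_insert, Set.mem_insert_iff] at hx hy
      rcases hx with rfl | hx <;> rcases hy with rfl | hy
      · rfl
      · rw [Function.update_self, Function.update_of_ne (by rintro rfl; exact ha hy)] at hxy
        exact absurd ⟨y, hy, hxy.symm⟩ hw.2
      · rw [Function.update_self, Function.update_of_ne (by rintro rfl; exact ha hx)] at hxy
        exact absurd ⟨x, hx, hxy⟩ hw.2
      · rw [Function.update_of_ne (by rintro rfl; exact ha hx),
          Function.update_of_ne (by rintro rfl; exact ha hy)] at hxy
        exact hinj hx hy hxy
    · intro z hz
      rcases Finset.mem_insert.mp hz with rfl | hzE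
      · rw [Function.update_self]
        exact ⟨hwD, by simpa [dist_comm] using hw.1⟩
      · rw [Function.update_of_ne (by rintro rfl; exact ha hzE)]
        exact hf z hzE

/-- For a topologically free residually finite action of a countable group on
the Cantor set, the finite approximating sets in the definition of residual
finiteness can be taken to consist entirely of free points. -/
theorem stmt19 {G X : Type*} [Group G] [Countable G]
    [MetricSpace X] [CompactSpace X] [TotallyDisconnectedSpace X]
    [PerfectSpace X] [Nonempty X] [MulAction G X]
    (hcont : ∀ g : G, Continuous fun x : X => g • x)
    (htopfree : Dense {x : X | ∀ g : G, g • x = x → g = 1})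
    (hresfin : ∀ (F : Finset G) (ε : ℝ), 0 < ε →
      ∃ (E : Finset X) (β : G → X → X), RFWitness F ε E β)
    (F : Finset G) (ε : ℝ) (hε : 0 < ε) :
    ∃ (E' : Finset X) (β' : G → X → X),
      (∀ z ∈ E', ∀ g : G, g • z = z → g = 1) ∧ RFWitness F ε E' β' := by
  classical
  -- uniform continuity of each s • ·
  have h1 : ∀ s : G, ∃ δ > 0, ∀ x y : X, dist x y < δ →
      dist (s • x) (s • y) < ε / 3 := by
    intro s
    have := (CompactSpace.uniformContinuous_of_continuous (hcont s))
    rw [Metric.uniformContinuous_iff] at this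
    obtain ⟨δ, hδ, h⟩ := this (ε / 3) (by linarith)
    exact ⟨δ, hδ, fun x y hxy => h hxy⟩
  choose δf hδfpos hδf using h1
  set S : Finset ℝ := insert (ε / 3) (F.image δf) with hS
  have hSne : S.Nonempty := ⟨ε / 3, Finset.mem_insert_self _ _⟩
  set δ : ℝ := S.min' hSne with hδdef
  have hδpos : 0 < δ := by
    apply Finset.lt_min'_iff S hSne |>.mpr
    intro y hy
    rcases Finset.mem_insert.mp hy with rfl | hy
    · linarith
    · obtain ⟨s, _, rfl⟩ := Finset.mem_image.mp hy
      exact hδfpos s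
  have hδε : δ ≤ ε / 3 := Finset.min'_le S _ (Finset.mem_insert_self _ _)
  have hδs : ∀ s ∈ F, δ ≤ δf s := fun s hs =>
    Finset.min'_le S _ (Finset.mem_insert.mpr (Or.inr (Finset.mem_image_of_mem δf hs)))
  obtain ⟨E, β, hβinv, hβ1, hβmul, hβdense, hβapprox⟩ := hresfin F δ hδpos
  obtain ⟨f, hinj, hf⟩ := exists_injOn_perturb _ htopfree E δ hδpos
  set g : X → X := Function.invFunOn f E with hg
  have hgmem : ∀ z' ∈ E.image f, g z' ∈ E ∧ f (g z') = z' := by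
    intro z' hz'
    obtain ⟨z, hz, rfl⟩ := Finset.mem_image.mp hz'
    exact ⟨Function.invFunOn_apply_mem hz, Function.invFunOn_apply_eq hz⟩
  have hgf : ∀ z ∈ E, g (f z) = z := fun z hz => hinj.leftInvOn_invFunOn hz
  refine ⟨E.image f, fun s z' => f (β s (g z')), ?_, ?_, ?_, ?_, ?_, ?_⟩
  · intro z' hz' g0 hg0
    obtain ⟨z, hz, rfl⟩ := Finset.mem_image.mp hz'
    exact (hf z hz).1 g0 hg0
  · intro s z' hz'
    exact Finset.mem_image_of_mem f (hβinv s _ (hgmem z' hz').1)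
  · intro z' hz'
    show f (β 1 (g z')) = z'
    rw [hβ1 _ (hgmem z' hz').1, (hgmem z' hz').2]
  · intro s t z' hz'
    have h1 : g z' ∈ E := (hgmem z' hz').1
    have h2 : β t (g z') ∈ E := hβinv t _ h1
    show f (β (s * t) (g z')) = f (β s (g (f (β t (g z')))))
    rw [hβmul s t _ h1, hgf _ h2]
  · intro x
    obtain ⟨z, hz, hxz⟩ := hβdense x
    refine ⟨f z, Finset.mem_image_of_mem f hz, ?_⟩
    have := (hf z hz).2
    calc dist x (f z) ≤ dist x z + dist z (f z) := dist_triangle _ _ _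
      _ < δ + δ := by linarith
      _ ≤ ε := by linarith
  · intro s hs z' hz'
    have h1 : g z' ∈ E := (hgmem z' hz').1
    have h2 : f (g z') = z' := (hgmem z' hz').2
    have h3 : dist (g z') z' < δ := by have := (hf _ h1).2; rwa [h2] at this
    have h4 : dist (s • z') (s • (g z')) < ε / 3 := by
      apply hδf s
      rw [dist_comm]
      exact lt_of_lt_of_le h3 (hδs s hs)
    have h5 : dist (s • (g z')) (β s (g z')) < δ := hβapprox s hs _ h1
    have h6 : dist (β s (g z')) (f (β s (g z'))) < δ := (hf _ (hβinv s _ h1)).2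
    calc dist (s • z') (f (β s (g z')))
        ≤ dist (s • z') (s • (g z')) + dist (s • (g z')) (β s (g z'))
          + dist (β s (g z')) (f (β s (g z'))) := dist_triangle4 _ _ _ _
      _ < ε / 3 + δ + δ := by linarith
      _ ≤ ε := by linarith
end
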